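/- Let T be a decision tree over a training data set (E, λ), let v be a cut of T with feature j = feat(v), and let x₀ ∈ ℝ be smaller than e[j] for every example e of E. Let x′ be the maximum of the finite set {e[j] : e ∈ E, e[j] ≤ thr(v)} ∪ {x₀}. Then the decision tree T′ obtained from T by replacing thr(v) with x′ assigns every example of E to the same leaf as T does; in particular, T and T′ have the same number of errors on (E, λ). -/

import Mathlib

/-- Decision trees with features of type `α`: each leaf carries a class label
(`true` = blue, `false` = red), each internal node (a *cut*) carries a feature
and a real threshold. -/
inductive DTree (α : Type) : Type
  | leaf (label : Bool) : DTree α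
  | node (feat : α) (thr : ℝ) (left right : DTree α) : DTree α

namespace DTree

/-- The class that the tree assigns to the example `e`. -/
noncomputable def classify {α : Type} : DTree α → (α → ℝ) → Bool
  | leaf c, _ => c
  | node f x l r, e => if e f ≤ x then l.classify e else r.classify e

/-- The path (sequence of left/right moves, `false` = left child, `true` = right child)
from the root to the leaf to which the tree assigns the example `e`. -/
noncomputable def pathOf {α : Type} : DTree α → (α → ℝ) → List Bool
  | leaf _, _ => []
  | node f x l r, e => if e f ≤ x then false :: l.pathOf e else true :: r.pathOf e

/-- The subtree rooted at position `p` (positions are paths from the root,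
`false` = left child, `true` = right child). -/
def subtreeAt {α : Type} : DTree α → List Bool → Option (DTree α)
  | t, [] => some t
  | leaf _, _ :: _ => none
  | node _ _ l r, b :: q => if b then r.subtreeAt q else l.subtreeAt q

/-- Replace the threshold of the cut at position `p` by `y`. -/
def setThr {α : Type} : DTree α → List Bool → ℝ → DTree α
  | node f _ l r, [], y => node f y l r
  | node f x l r, b :: q, y =>
      if b then node f x l (r.setThr q y) else node f x (l.setThr q y) r
  | t, _, _ => t

end DTree

/-- The number of errors of `T` on the training data set `(E, lab)`. -/
noncomputable def errorCount {α ι : Type} [Fintype ι] (E : ι → α → ℝ)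
    (lab : ι → Bool) (T : DTree α) : ℕ :=
  (Finset.univ.filter (fun i => T.classify (E i) ≠ lab i)).card

/-! Changing the threshold of a cut changes nothing on the data as long as every example
stays on the same side of the cut. No example value lies in the interval `(x', x]`, and every
example value exceeds `x₀`, so `e j ≤ x'` holds exactly when `e j ≤ x`. -/

namespace DTree

variable {α : Type} {T l r : DTree α} {p : List Bool} {j : α} {x y : ℝ} {e : α → ℝ}

theorem pathOf_setThr (hp : T.subtreeAt p = some (node j x l r)) (he : e j ≤ y ↔ e j ≤ x) :
    (T.setThr p y).pathOf e = T.pathOf e := by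
  induction p generalizing T with
  | nil =>
    simp only [subtreeAt, Option.some.injEq] at hp
    subst hp
    simp only [setThr, pathOf, he]
  | cons b q ih =>
    cases T with
    | leaf => cases hp
    | node f z L R =>
      cases b
      · simp only [setThr, pathOf, Bool.false_eq_true, ↓reduceIte, ih hp]
      · simp only [setThr, pathOf, ↓reduceIte, ih hp]

theorem classify_setThr (hp : T.subtreeAt p = some (node j x l r)) (he : e j ≤ y ↔ e j ≤ x) :
    (T.setThr p y).classify e = T.classify e := by
  induction p generalizing T with
  | nil =>
    simp only [subtreeAt, Option.some.injEq] at hp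
    subst hp
    simp only [setThr, classify, he]
  | cons b q ih =>
    cases T with
    | leaf => cases hp
    | node f z L R =>
      cases b
      · simp only [setThr, classify, Bool.false_eq_true, ↓reduceIte, ih hp]
      · simp only [setThr, classify, ↓reduceIte, ih hp]

end DTree

theorem errorCount_congr {α ι : Type} [Fintype ι] {E : ι → α → ℝ} {lab : ι → Bool}
    {T T' : DTree α} (h : ∀ i, T'.classify (E i) = T.classify (E i)) :
    errorCount E lab T' = errorCount E lab T := by
  simp only [errorCount, h]

theorem le_max'_insert_image_filter_le_iff {ι β : Type} [LinearOrder β] {s : Finset ι}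
    {a : ι → β} {x₀ x m : β} (h₀ : ∀ i ∈ s, x₀ < a i)
    (hm : m = (insert x₀ ((s.filter (a · ≤ x)).image a)).max' (Finset.insert_nonempty _ _))
    {i : ι} (hi : i ∈ s) :
    a i ≤ m ↔ a i ≤ x := by
  constructor
  · intro him
    rcases Finset.mem_insert.1 (hm ▸ Finset.max'_mem _ _) with rfl | hm_mem
    · exact absurd him (h₀ i hi).not_ge
    · obtain ⟨k, hk, rfl⟩ := Finset.mem_image.1 hm_mem
      exact him.trans (Finset.mem_filter.1 hk).2
  · intro hix
    exact hm ▸ Finset.le_max' _ _ (Finset.mem_insert_of_mem (Finset.mem_image_of_mem a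
      (Finset.mem_filter.2 ⟨hi, hix⟩)))

theorem stmt2 {α ι : Type} [Fintype ι] (E : ι → α → ℝ) (lab : ι → Bool)
    (T : DTree α) (p : List Bool) (j : α) (x : ℝ) (l r : DTree α)
    (hp : T.subtreeAt p = some (DTree.node j x l r))
    (x₀ : ℝ) (hx₀ : ∀ i : ι, x₀ < E i j) (x' : ℝ)
    (hx' : x' = (insert x₀ ((Finset.univ.filter (fun i : ι => E i j ≤ x)).image
        (fun i => E i j))).max' (Finset.insert_nonempty _ _)) :
    (∀ i : ι, (T.setThr p x').pathOf (E i) = T.pathOf (E i)) ∧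
      errorCount E lab (T.setThr p x') = errorCount E lab T := by
  have same_side (i : ι) : E i j ≤ x' ↔ E i j ≤ x :=
    le_max'_insert_image_filter_le_iff (fun i _ => hx₀ i) hx' (Finset.mem_univ i)
  exact ⟨fun i => DTree.pathOf_setThr hp (same_side i),
    errorCount_congr fun i => DTree.classify_setThr hp (same_side i)⟩
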